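/- arXiv:2211.03446 — 3 statements merged into one kernel-verified Lean document; each statement's English description precedes it below -/
import Mathlib

section
/- For every γ ∈ (0,1) and every self-similar profile G ∈ 𝓔_γ one has ∫_ℝ x² G(x) dx ≤ 1/2. As a consequence, there exists a universal constant C̃ > 0 (independent of γ and G) such that ∫_ℝ (1+|x|)^s G(x) dx ≤ C̃ for every s ∈ [0,2], every γ ∈ (0,1), and every G ∈ 𝓔_γ. -/
/-!
Testing the weak equation against the bounded truncations `x² · c / (c + x²)` of `x²` and letting
`c → ∞` (dominated convergence, with the third moment as majorant) gives
`∬ |x - y|^γ (x - y)² G(x) G(y) = 2 ∫ x² G`. Unit mass and zero momentum give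
`∬ (x - y)² G(x) G(y) = 2 ∫ x² G` as well. Integrating Bernoulli's inequality
`(2 + γ) t² ≤ 2 |t|^γ t² + γ` against the probability density `G(x) G(y)` therefore yields
`(2 + γ) · 2E ≤ 2 · 2E + γ`, i.e. `E ≤ 1/2`. The weighted moments follow from
`(1 + |x|)^s ≤ 2 (1 + x²)` for `s ≤ 2`.
-/

open MeasureTheory Real Set Filter

noncomputable section

/-- `G ∈ 𝓔_γ`: nonnegative, unit mass, zero momentum, third moment finite,
satisfying the weak steady self-similar equation against bounded `C¹` test functions. -/
def IsProfile (γ : ℝ) (G : ℝ → ℝ) : Prop :=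
  (∀ x, 0 ≤ G x) ∧
  Integrable G ∧
  Integrable (fun x => (1 + |x|) ^ (3 : ℝ) * G x) ∧
  (∫ x, G x) = 1 ∧
  (∫ x, x * G x) = 0 ∧
  ∀ φ : ℝ → ℝ, ContDiff ℝ 1 φ →
    (∃ M, ∀ x, |φ x| ≤ M ∧ |deriv φ x| ≤ M) →
    -(1/4) * (∫ x, x * deriv φ x * G x) =
      (1/2) * ∫ x, ∫ y, |x - y| ^ γ * (2 * φ ((x + y) / 2) - φ x - φ y) * G x * G y

open scoped Topology

lemma abs_two_mul_midpoint_sub_le {φ φ' φ'' : ℝ → ℝ} {K : ℝ}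
    (hφ : ∀ x, HasDerivAt φ (φ' x) x) (hφ' : ∀ x, HasDerivAt φ' (φ'' x) x)
    (hK : ∀ x, |φ'' x| ≤ K) (x y : ℝ) :
    |2 * φ ((x + y) / 2) - φ x - φ y| ≤ K / 2 * (x - y) ^ 2 := by
  set m := (x + y) / 2
  set h := (y - x) / 2
  have lip : ∀ a b, |φ' a - φ' b| ≤ K * |a - b| := fun a b => by
    simpa [Real.norm_eq_abs] using
      convex_univ.norm_image_sub_le_of_norm_deriv_le (fun z _ => (hφ' z).differentiableAt)
        (fun z _ => by simpa [(hφ' z).deriv] using hK z) (mem_univ b) (mem_univ a)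
  have hg : ∀ t, HasDerivAt (fun t => φ (m + t) + φ (m - t)) (φ' (m + t) - φ' (m - t)) t := by
    intro t
    simpa only [sub_eq_add_neg] using
      ((hφ (m + t)).comp_const_add m t).fun_add ((hφ (m - t)).comp_const_sub m t)
  -- `g t = φ (m + t) + φ (m - t)` has `|g' t| ≤ 2 K |t|`, and `g h - g 0` is the second difference
  have key := (convex_uIcc 0 h).norm_image_sub_le_of_norm_deriv_le
    (fun t _ => (hg t).differentiableAt) (C := 2 * K * |h|) (fun t ht => by
      rw [(hg t).deriv, Real.norm_eq_abs]
      have ht' : |t| ≤ |h| := by simpa using abs_sub_left_of_mem_uIcc ht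
      calc |φ' (m + t) - φ' (m - t)| ≤ K * |m + t - (m - t)| := lip _ _
        _ = 2 * K * |t| := by rw [show m + t - (m - t) = 2 * t by ring, abs_mul]; norm_num; ring
        _ ≤ 2 * K * |h| := by gcongr; linarith [(abs_nonneg _).trans (hK 0)])
    left_mem_uIcc right_mem_uIcc
  have hmh : m + h = y ∧ m - h = x := by constructor <;> ring
  simp only [hmh, add_zero, sub_zero, Real.norm_eq_abs] at key
  calc |2 * φ m - φ x - φ y| = |φ y + φ x - (φ m + φ m)| := by rw [← abs_neg]; ring_nf
    _ ≤ 2 * K * |h| * |h| := key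
    _ = K / 2 * (x - y) ^ 2 := by rw [mul_assoc, ← sq, sq_abs]; ring

def sqTrunc (c x : ℝ) : ℝ := x ^ 2 * (c / (c + x ^ 2))

def sqTruncDeriv (c x : ℝ) : ℝ := 2 * x * (c / (c + x ^ 2)) ^ 2

section SqTrunc

variable {c : ℝ}

lemma hasDerivAt_sqTrunc (hc : 0 < c) (x : ℝ) :
    HasDerivAt (sqTrunc c) (sqTruncDeriv c x) x := by
  have e : sqTrunc c = fun y => c * y ^ 2 / (c + y ^ 2) := by
    funext y; simp only [sqTrunc]; ring
  rw [e]
  exact (((hasDerivAt_pow 2 x).const_mul c).fun_div ((hasDerivAt_pow 2 x).const_add c)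
    (by positivity)).congr_deriv (by simp only [sqTruncDeriv]; field_simp; ring)

lemma hasDerivAt_sqTruncDeriv (hc : 0 < c) (x : ℝ) :
    HasDerivAt (sqTruncDeriv c) (2 * c ^ 2 * (c - 3 * x ^ 2) / (c + x ^ 2) ^ 3) x := by
  have e : sqTruncDeriv c = fun y => 2 * c ^ 2 * y / (c + y ^ 2) ^ 2 := by
    funext y; simp only [sqTruncDeriv]; field_simp
  rw [e]
  exact (((hasDerivAt_id' x).const_mul (2 * c ^ 2)).fun_div
    (((hasDerivAt_pow 2 x).const_add c).fun_pow 2) (by positivity)).congr_deriv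
    (by field_simp; ring)

lemma abs_deriv_sqTruncDeriv_le (hc : 0 < c) (x : ℝ) :
    |2 * c ^ 2 * (c - 3 * x ^ 2) / (c + x ^ 2) ^ 3| ≤ 6 := by
  have hd : 0 < c + x ^ 2 := by positivity
  rw [abs_div, abs_of_pos (pow_pos hd 3), div_le_iff₀ (pow_pos hd 3), abs_le]
  constructor <;> nlinarith [sq_nonneg x, mul_pos hc hc, mul_pos (mul_pos hc hc) hd,
    mul_nonneg (mul_nonneg hd.le hd.le) (sq_nonneg x)]

lemma abs_sqTrunc_midpoint_sub_le (hc : 0 < c) (x y : ℝ) :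
    |2 * sqTrunc c ((x + y) / 2) - sqTrunc c x - sqTrunc c y| ≤ 3 * (x - y) ^ 2 := by
  have := abs_two_mul_midpoint_sub_le (hasDerivAt_sqTrunc hc) (hasDerivAt_sqTruncDeriv hc)
    (abs_deriv_sqTruncDeriv_le hc) x y
  linarith

lemma continuous_sqTruncDeriv (hc : 0 < c) : Continuous (sqTruncDeriv c) :=
  continuous_iff_continuousAt.2 fun x => (hasDerivAt_sqTruncDeriv hc x).continuousAt

lemma contDiff_sqTrunc (hc : 0 < c) : ContDiff ℝ 1 (sqTrunc c) :=
  contDiff_one_iff_deriv.2 ⟨fun x => (hasDerivAt_sqTrunc hc x).differentiableAt, by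
    rw [funext fun x => (hasDerivAt_sqTrunc hc x).deriv]
    exact continuous_sqTruncDeriv hc⟩

lemma abs_sqTrunc_le (hc : 0 < c) (x : ℝ) : |sqTrunc c x| ≤ c := by
  have hd : 0 < c + x ^ 2 := by positivity
  rw [sqTrunc, abs_of_nonneg (by positivity), mul_div_assoc', div_le_iff₀ hd]
  nlinarith [sq_nonneg x]

lemma abs_sqTruncDeriv_le (hc : 1 ≤ c) (x : ℝ) : |sqTruncDeriv c x| ≤ c := by
  have hd : 0 < c + x ^ 2 := by positivity
  have hr : c / (c + x ^ 2) ≤ 1 := div_le_one_of_le₀ (by nlinarith [sq_nonneg x]) (by positivity)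
  have hx : 2 * |x| ≤ c + x ^ 2 := by nlinarith [sq_nonneg (|x| - 1), sq_abs x]
  calc |sqTruncDeriv c x| = 2 * |x| * (c / (c + x ^ 2)) * (c / (c + x ^ 2)) := by
        rw [sqTruncDeriv, abs_mul, abs_mul, abs_of_nonneg (by positivity : (0:ℝ) ≤ _ ^ 2)]
        norm_num; ring
    _ ≤ 2 * |x| * (c / (c + x ^ 2)) := mul_le_of_le_one_right (by positivity) hr
    _ ≤ c := by rw [mul_div_assoc', div_le_iff₀ hd]; nlinarith

lemma abs_mul_sqTruncDeriv_le (hc : 0 < c) (x : ℝ) : |x * sqTruncDeriv c x| ≤ 2 * x ^ 2 := by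
  have hr : c / (c + x ^ 2) ≤ 1 := div_le_one_of_le₀ (by nlinarith [sq_nonneg x]) (by positivity)
  rw [sqTruncDeriv, show x * (2 * x * (c / (c + x ^ 2)) ^ 2) = 2 * x ^ 2 * (c / (c + x ^ 2)) ^ 2
    by ring, abs_of_nonneg (by positivity)]
  exact mul_le_of_le_one_right (by positivity) (pow_le_one₀ (by positivity) hr)

lemma tendsto_div_add_sq_atTop (x : ℝ) : Tendsto (fun c : ℝ => c / (c + x ^ 2)) atTop (𝓝 1) := by
  have h : Tendsto (fun c : ℝ => 1 - x ^ 2 / (c + x ^ 2)) atTop (𝓝 (1 - 0)) :=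
    tendsto_const_nhds.sub <| tendsto_const_nhds.div_atTop <|
      tendsto_atTop_add_const_right _ _ tendsto_id
  rw [sub_zero] at h
  refine h.congr' ?_
  filter_upwards [eventually_gt_atTop 0] with c hc
  have : c + x ^ 2 ≠ 0 := by positivity
  field_simp
  ring

lemma tendsto_sqTrunc_atTop (x : ℝ) : Tendsto (fun c => sqTrunc c x) atTop (𝓝 (x ^ 2)) := by
  simpa [sqTrunc] using (tendsto_div_add_sq_atTop x).const_mul (x ^ 2)

lemma tendsto_mul_sqTruncDeriv_atTop (x : ℝ) :
    Tendsto (fun c => x * sqTruncDeriv c x) atTop (𝓝 (2 * x ^ 2)) := by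
  have := ((tendsto_div_add_sq_atTop x).pow 2).const_mul (2 * x ^ 2)
  simp only [one_pow, mul_one] at this
  refine this.congr fun c => ?_
  simp only [sqTruncDeriv]; ring

end SqTrunc

lemma abs_pow_le_one_add_abs_pow {x : ℝ} {n m : ℕ} (h : n ≤ m) : |x| ^ n ≤ (1 + |x|) ^ m :=
  calc |x| ^ n ≤ (1 + |x|) ^ n := by gcongr; linarith
    _ ≤ (1 + |x|) ^ m := pow_le_pow_right₀ (le_add_of_nonneg_right (abs_nonneg x)) h

lemma rpow_le_one_add {t γ : ℝ} (ht : 0 ≤ t) (hγ0 : 0 ≤ γ) (hγ1 : γ ≤ 1) : t ^ γ ≤ 1 + t := by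
  rcases le_total t 1 with h | h
  · linarith [Real.rpow_le_one ht h hγ0]
  · have := Real.rpow_le_rpow_of_exponent_le h hγ1
    rw [Real.rpow_one] at this
    linarith

lemma abs_sub_rpow_mul_sq_le {γ : ℝ} (hγ0 : 0 ≤ γ) (hγ1 : γ ≤ 1) (x y : ℝ) :
    |x - y| ^ γ * (x - y) ^ 2 ≤ (1 + |x|) ^ 3 * (1 + |y|) ^ 3 := by
  have hxy : |x - y| ≤ |x| + |y| := abs_sub _ _
  calc |x - y| ^ γ * (x - y) ^ 2 ≤ (1 + |x - y|) ^ 3 := by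
        rw [← sq_abs]
        nlinarith [rpow_le_one_add (abs_nonneg (x - y)) hγ0 hγ1, abs_nonneg (x - y),
          Real.rpow_nonneg (abs_nonneg (x - y)) γ]
    _ ≤ ((1 + |x|) * (1 + |y|)) ^ 3 := by
        gcongr; nlinarith [abs_nonneg x, abs_nonneg y]
    _ = (1 + |x|) ^ 3 * (1 + |y|) ^ 3 := mul_pow _ _ _

lemma two_add_mul_sq_le {γ : ℝ} (hγ : 0 ≤ γ) (t : ℝ) :
    (2 + γ) * t ^ 2 ≤ 2 * (|t| ^ γ * t ^ 2) + γ := by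
  have hB := one_add_mul_self_le_rpow_one_add (s := t ^ 2 - 1) (by nlinarith [sq_nonneg t])
    (p := 1 + γ / 2) (by linarith)
  have e : (1 + (t ^ 2 - 1)) ^ (1 + γ / 2) = |t| ^ γ * t ^ 2 := by
    rw [add_sub_cancel, ← sq_abs, ← Real.rpow_natCast, ← Real.rpow_mul (abs_nonneg t),
      ← Real.rpow_add' (abs_nonneg t) (by positivity)]
    ring_nf
  linarith

lemma abs_interaction_sqTrunc_le {γ c : ℝ} (hγ0 : 0 ≤ γ) (hγ1 : γ ≤ 1) (hc : 0 < c) (p : ℝ × ℝ) :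
    |(|p.1 - p.2| ^ γ * (2 * sqTrunc c ((p.1 + p.2) / 2) - sqTrunc c p.1 - sqTrunc c p.2))| ≤
      3 * ((1 + |p.1|) ^ 3 * (1 + |p.2|) ^ 3) := by
  have hA : 0 ≤ |p.1 - p.2| ^ γ := Real.rpow_nonneg (abs_nonneg _) γ
  rw [abs_mul, abs_of_nonneg hA]
  calc _ ≤ |p.1 - p.2| ^ γ * (3 * (p.1 - p.2) ^ 2) :=
        mul_le_mul_of_nonneg_left (abs_sqTrunc_midpoint_sub_le hc _ _) hA
    _ ≤ 3 * ((1 + |p.1|) ^ 3 * (1 + |p.2|) ^ 3) := by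
        nlinarith [abs_sub_rpow_mul_sq_le hγ0 hγ1 p.1 p.2]

lemma continuous_interaction_sqTrunc {γ c : ℝ} (hγ0 : 0 ≤ γ) (hc : 0 < c) :
    Continuous fun p : ℝ × ℝ =>
      |p.1 - p.2| ^ γ * (2 * sqTrunc c ((p.1 + p.2) / 2) - sqTrunc c p.1 - sqTrunc c p.2) := by
  have := (contDiff_sqTrunc hc).continuous
  fun_prop (disch := exact hγ0)

lemma one_add_abs_rpow_le {s : ℝ} (hs : s ≤ 2) (x : ℝ) : (1 + |x|) ^ s ≤ 2 * (1 + x ^ 2) := by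
  have h1 : (1 : ℝ) ≤ 1 + |x| := le_add_of_nonneg_right (abs_nonneg x)
  calc (1 + |x|) ^ s ≤ (1 + |x|) ^ (2 : ℝ) := Real.rpow_le_rpow_of_exponent_le h1 hs
    _ = (1 + |x|) ^ 2 := Real.rpow_ofNat _ 2
    _ ≤ 2 * (1 + x ^ 2) := by nlinarith [sq_nonneg (|x| - 1), sq_abs x]

lemma integral_one_add_abs_rpow_mul_le {G : ℝ → ℝ} (hG0 : ∀ x, 0 ≤ G x) (hG : Integrable G)
    (hG2 : Integrable fun x => x ^ 2 * G x) {s : ℝ} (hs : s ≤ 2) :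
    ∫ x, (1 + |x|) ^ s * G x ≤ 2 * (∫ x, G x) + 2 * ∫ x, x ^ 2 * G x := by
  have hbound : Integrable fun x => 2 * G x + 2 * (x ^ 2 * G x) :=
    (hG.const_mul 2).add (hG2.const_mul 2)
  have hle : ∀ x, (1 + |x|) ^ s * G x ≤ 2 * G x + 2 * (x ^ 2 * G x) := fun x => by
    nlinarith [mul_le_mul_of_nonneg_right (one_add_abs_rpow_le hs x) (hG0 x)]
  have hint : Integrable fun x => (1 + |x|) ^ s * G x := by
    refine hbound.mono' ?_ (ae_of_all _ fun x => ?_)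
    · have hcont : Continuous fun x : ℝ => (1 + |x|) ^ s :=
        (continuous_const.add continuous_abs).rpow_const fun x =>
          Or.inl (by positivity : (0 : ℝ) < 1 + |x|).ne'
      exact hcont.aestronglyMeasurable.mul hG.aestronglyMeasurable
    · rw [Real.norm_eq_abs, abs_of_nonneg (mul_nonneg (by positivity) (hG0 x))]
      exact hle x
  calc ∫ x, (1 + |x|) ^ s * G x ≤ ∫ x, (2 * G x + 2 * (x ^ 2 * G x)) :=
        integral_mono hint hbound hle
    _ = 2 * (∫ x, G x) + 2 * ∫ x, x ^ 2 * G x := by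
        rw [integral_add (hG.const_mul 2) (hG2.const_mul 2), integral_const_mul,
          integral_const_mul]

lemma integral_sub_sq_mul_mul {G : ℝ → ℝ} (hG : Integrable G) (hG1 : Integrable fun x => x * G x)
    (hG2 : Integrable fun x => x ^ 2 * G x) (hmass : ∫ x, G x = 1)
    (hmom : ∫ x, x * G x = 0) :
    ∫ p : ℝ × ℝ, (p.1 - p.2) ^ 2 * G p.1 * G p.2 = 2 * ∫ x, x ^ 2 * G x := by
  have h₁ : Integrable (fun p : ℝ × ℝ => p.1 ^ 2 * G p.1 * G p.2) (volume.prod volume) :=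
    hG2.mul_prod hG
  have h₂ : Integrable (fun p : ℝ × ℝ => 2 * (p.1 * G p.1 * (p.2 * G p.2))) (volume.prod volume) :=
    (hG1.mul_prod hG1).const_mul 2
  have h₁₂ : Integrable (fun p : ℝ × ℝ => p.1 ^ 2 * G p.1 * G p.2 -
      2 * (p.1 * G p.1 * (p.2 * G p.2))) (volume.prod volume) := h₁.sub h₂
  have expand : (fun p : ℝ × ℝ => (p.1 - p.2) ^ 2 * G p.1 * G p.2) = fun p =>
      p.1 ^ 2 * G p.1 * G p.2 - 2 * (p.1 * G p.1 * (p.2 * G p.2)) + G p.1 * (p.2 ^ 2 * G p.2) := by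
    funext p; ring
  rw [Measure.volume_eq_prod, expand, integral_add h₁₂ (hG.mul_prod hG2), integral_sub h₁ h₂,
    integral_const_mul, integral_prod_mul (fun x => x ^ 2 * G x) G,
    integral_prod_mul (fun x => x * G x) (fun y => y * G y),
    integral_prod_mul G (fun y => y ^ 2 * G y), hmass, hmom]
  ring

namespace IsProfile

variable {γ : ℝ} {G : ℝ → ℝ}

lemma nonneg (hG : IsProfile γ G) (x : ℝ) : 0 ≤ G x := hG.1 x

lemma integrable (hG : IsProfile γ G) : Integrable G := hG.2.1

lemma integral_eq_one (hG : IsProfile γ G) : ∫ x, G x = 1 := hG.2.2.2.1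

lemma integral_mul_eq_zero (hG : IsProfile γ G) : ∫ x, x * G x = 0 := hG.2.2.2.2.1

lemma integrable_weight (hG : IsProfile γ G) : Integrable fun x => (1 + |x|) ^ 3 * G x := by
  simpa only [← Real.rpow_ofNat] using hG.2.2.1

lemma integrable_mul_of_abs_le (hG : IsProfile γ G) {f : ℝ → ℝ} (hf : Continuous f)
    (hb : ∀ x, |f x| ≤ (1 + |x|) ^ 3) : Integrable fun x => f x * G x := by
  refine hG.integrable_weight.mono'
    (hf.aestronglyMeasurable.mul hG.integrable.aestronglyMeasurable) (ae_of_all _ fun x => ?_)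
  rw [Real.norm_eq_abs, abs_mul, abs_of_nonneg (hG.nonneg x)]
  exact mul_le_mul_of_nonneg_right (hb x) (hG.nonneg x)

lemma integrable_mul (hG : IsProfile γ G) : Integrable fun x => x * G x :=
  hG.integrable_mul_of_abs_le continuous_id fun x => by
    simpa using abs_pow_le_one_add_abs_pow (x := x) (by norm_num : 1 ≤ 3)

lemma integrable_sq_mul (hG : IsProfile γ G) : Integrable fun x => x ^ 2 * G x :=
  hG.integrable_mul_of_abs_le (continuous_pow 2) fun x => by
    simpa using abs_pow_le_one_add_abs_pow (x := x) (by norm_num : 2 ≤ 3)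

lemma norm_mul_mul_le (hG : IsProfile γ G) {a C x y : ℝ}
    (hb : |a| ≤ C * ((1 + |x|) ^ 3 * (1 + |y|) ^ 3)) :
    ‖a * G x * G y‖ ≤ C * (((1 + |x|) ^ 3 * G x) * ((1 + |y|) ^ 3 * G y)) := by
  rw [Real.norm_eq_abs, abs_mul, abs_mul, abs_of_nonneg (hG.nonneg x),
    abs_of_nonneg (hG.nonneg y)]
  calc |a| * G x * G y ≤ C * ((1 + |x|) ^ 3 * (1 + |y|) ^ 3) * G x * G y := by
        gcongr <;> exact hG.nonneg _
    _ = _ := by ring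

lemma integrable_weight_prod (hG : IsProfile γ G) :
    Integrable fun p : ℝ × ℝ => ((1 + |p.1|) ^ 3 * G p.1) * ((1 + |p.2|) ^ 3 * G p.2) := by
  rw [Measure.volume_eq_prod]
  exact hG.integrable_weight.mul_prod hG.integrable_weight

lemma integrable_prod_of_abs_le (hG : IsProfile γ G) {F : ℝ × ℝ → ℝ} {C : ℝ} (hF : Continuous F)
    (hb : ∀ p, |F p| ≤ C * ((1 + |p.1|) ^ 3 * (1 + |p.2|) ^ 3)) :
    Integrable fun p : ℝ × ℝ => F p * G p.1 * G p.2 := by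
  have hGG : AEStronglyMeasurable (fun p : ℝ × ℝ => G p.1 * G p.2) := by
    rw [Measure.volume_eq_prod]
    exact (hG.integrable.mul_prod hG.integrable).aestronglyMeasurable
  refine (hG.integrable_weight_prod.const_mul C).mono' ?_
    (ae_of_all _ fun p => hG.norm_mul_mul_le (hb p))
  exact (hF.aestronglyMeasurable.mul hGG).congr (ae_of_all _ fun p => (mul_assoc _ _ _).symm)

lemma weak_eq_sqTrunc (hG : IsProfile γ G) (hγ0 : 0 ≤ γ) (hγ1 : γ ≤ 1) {c : ℝ} (hc : 1 ≤ c) :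
    -(1/4) * ∫ x, x * sqTruncDeriv c x * G x =
      (1/2) * ∫ p : ℝ × ℝ, |p.1 - p.2| ^ γ *
        (2 * sqTrunc c ((p.1 + p.2) / 2) - sqTrunc c p.1 - sqTrunc c p.2) * G p.1 * G p.2 := by
  have hc0 : 0 < c := one_pos.trans_le hc
  have hderiv : deriv (sqTrunc c) = sqTruncDeriv c :=
    funext fun x => (hasDerivAt_sqTrunc hc0 x).deriv
  have hint := hG.integrable_prod_of_abs_le (continuous_interaction_sqTrunc hγ0 hc0)
    (abs_interaction_sqTrunc_le hγ0 hγ1 hc0)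
  obtain ⟨-, -, -, -, -, hweak⟩ := hG
  replace hweak := hweak (sqTrunc c) (contDiff_sqTrunc hc0)
    ⟨c, fun x => ⟨abs_sqTrunc_le hc0 x, hderiv ▸ abs_sqTruncDeriv_le hc x⟩⟩
  rw [Measure.volume_eq_prod] at hint
  rwa [hderiv, integral_integral hint, ← Measure.volume_eq_prod] at hweak

lemma integral_interaction_eq (hG : IsProfile γ G) (hγ0 : 0 ≤ γ) (hγ1 : γ ≤ 1) :
    ∫ p : ℝ × ℝ, |p.1 - p.2| ^ γ * (p.1 - p.2) ^ 2 * G p.1 * G p.2 = 2 * ∫ x, x ^ 2 * G x := by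
  have hL : Tendsto (fun c => ∫ x, x * sqTruncDeriv c x * G x) atTop
      (𝓝 (∫ x, 2 * x ^ 2 * G x)) := by
    refine tendsto_integral_filter_of_dominated_convergence _ ?_ ?_
      (hG.integrable_sq_mul.const_mul 2) (ae_of_all _ fun x =>
        (tendsto_mul_sqTruncDeriv_atTop x).mul_const (G x))
    · filter_upwards [eventually_gt_atTop 0] with c hc
      exact (continuous_id.mul (continuous_sqTruncDeriv hc)).aestronglyMeasurable.mul
        hG.integrable.aestronglyMeasurable
    · filter_upwards [eventually_gt_atTop 0] with c hc
      refine ae_of_all _ fun x => ?_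
      rw [Real.norm_eq_abs, abs_mul, abs_of_nonneg (hG.nonneg x), ← mul_assoc]
      exact mul_le_mul_of_nonneg_right (abs_mul_sqTruncDeriv_le hc x) (hG.nonneg x)
  have hR : Tendsto (fun c => ∫ p : ℝ × ℝ, |p.1 - p.2| ^ γ *
        (2 * sqTrunc c ((p.1 + p.2) / 2) - sqTrunc c p.1 - sqTrunc c p.2) * G p.1 * G p.2) atTop
      (𝓝 (∫ p : ℝ × ℝ, |p.1 - p.2| ^ γ * (-((p.1 - p.2) ^ 2 / 2)) * G p.1 * G p.2)) := by
    refine tendsto_integral_filter_of_dominated_convergence _ ?_ ?_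
      (hG.integrable_weight_prod.const_mul 3) (ae_of_all _ fun p => ?_)
    · filter_upwards [eventually_gt_atTop 0] with c hc
      exact (hG.integrable_prod_of_abs_le (continuous_interaction_sqTrunc hγ0 hc)
        (abs_interaction_sqTrunc_le hγ0 hγ1 hc)).aestronglyMeasurable
    · filter_upwards [eventually_gt_atTop 0] with c hc
      exact ae_of_all _ fun p => hG.norm_mul_mul_le (abs_interaction_sqTrunc_le hγ0 hγ1 hc p)
    · have hD := (((tendsto_sqTrunc_atTop ((p.1 + p.2) / 2)).const_mul 2).sub
        (tendsto_sqTrunc_atTop p.1)).sub (tendsto_sqTrunc_atTop p.2)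
      convert ((hD.const_mul (|p.1 - p.2| ^ γ)).mul_const (G p.1)).mul_const (G p.2) using 4
      ring
  have key := tendsto_nhds_unique ((hL.const_mul (-(1/4))).congr'
    (eventually_ge_atTop 1 |>.mono fun c hc => hG.weak_eq_sqTrunc hγ0 hγ1 hc))
    (hR.const_mul (1/2))
  have hL' : ∫ x, 2 * x ^ 2 * G x = 2 * ∫ x, x ^ 2 * G x := by
    simp_rw [mul_assoc]; exact integral_const_mul _ _
  have hR' : ∫ p : ℝ × ℝ, |p.1 - p.2| ^ γ * (-((p.1 - p.2) ^ 2 / 2)) * G p.1 * G p.2 =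
      -(1/2) * ∫ p : ℝ × ℝ, |p.1 - p.2| ^ γ * (p.1 - p.2) ^ 2 * G p.1 * G p.2 := by
    rw [← integral_const_mul]; congr 1; funext p; ring
  rw [hL', hR'] at key
  linarith

lemma integral_sq_mul_le_half (hG : IsProfile γ G) (hγ0 : 0 < γ) (hγ1 : γ ≤ 1) :
    ∫ x, x ^ 2 * G x ≤ 1 / 2 := by
  have hP := hG.integral_interaction_eq hγ0.le hγ1
  have hQ := integral_sub_sq_mul_mul hG.integrable hG.integrable_mul hG.integrable_sq_mul
    hG.integral_eq_one hG.integral_mul_eq_zero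
  have hmass : ∫ p : ℝ × ℝ, G p.1 * G p.2 = 1 := by
    rw [Measure.volume_eq_prod, integral_prod_mul, hG.integral_eq_one, one_mul]
  have hPint : Integrable fun p : ℝ × ℝ => |p.1 - p.2| ^ γ * (p.1 - p.2) ^ 2 * G p.1 * G p.2 :=
    hG.integrable_prod_of_abs_le (C := 1) (by fun_prop (disch := exact hγ0.le)) fun p => by
      rw [one_mul, abs_of_nonneg (by positivity)]
      exact abs_sub_rpow_mul_sq_le hγ0.le hγ1 p.1 p.2
  have hQint : Integrable fun p : ℝ × ℝ => (p.1 - p.2) ^ 2 * G p.1 * G p.2 :=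
    hG.integrable_prod_of_abs_le (C := 1) (by fun_prop) fun p => by
      simpa using abs_sub_rpow_mul_sq_le le_rfl zero_le_one p.1 p.2
  have hGG : Integrable fun p : ℝ × ℝ => G p.1 * G p.2 := by
    rw [Measure.volume_eq_prod]; exact hG.integrable.mul_prod hG.integrable
  have hmono : (2 + γ) * ∫ p : ℝ × ℝ, (p.1 - p.2) ^ 2 * G p.1 * G p.2 ≤
      2 * (∫ p : ℝ × ℝ, |p.1 - p.2| ^ γ * (p.1 - p.2) ^ 2 * G p.1 * G p.2) +
        γ * ∫ p : ℝ × ℝ, G p.1 * G p.2 := by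
    rw [← integral_const_mul, ← integral_const_mul, ← integral_const_mul,
      ← integral_add (hPint.const_mul 2) (hGG.const_mul γ)]
    refine integral_mono (hQint.const_mul _) ((hPint.const_mul 2).add (hGG.const_mul γ))
      fun p => ?_
    have := mul_le_mul_of_nonneg_right (two_add_mul_sq_le hγ0.le (p.1 - p.2))
      (mul_nonneg (hG.nonneg p.1) (hG.nonneg p.2))
    simp only
    linarith
  rw [hP, hQ, hmass] at hmono
  nlinarith

end IsProfile

/-- **Uniform energy control.** Every self-similar profile has kinetic energy at most `1/2`,
and consequently its weighted `L¹` norms of order `s ∈ [0,2]` are bounded by a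
universal constant. -/
theorem uniform_energy_control :
    (∀ γ ∈ Ioo (0:ℝ) 1, ∀ G : ℝ → ℝ, IsProfile γ G →
      (∫ x, x ^ 2 * G x) ≤ 1/2) ∧
    ∃ C > (0:ℝ), ∀ s ∈ Icc (0:ℝ) 2, ∀ γ ∈ Ioo (0:ℝ) 1, ∀ G : ℝ → ℝ, IsProfile γ G →
      (∫ x, (1 + |x|) ^ s * G x) ≤ C := by
  have energy : ∀ γ ∈ Ioo (0:ℝ) 1, ∀ G : ℝ → ℝ, IsProfile γ G → ∫ x, x ^ 2 * G x ≤ 1/2 :=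
    fun γ hγ G hG => hG.integral_sq_mul_le_half hγ.1 hγ.2.le
  refine ⟨energy, 3, by norm_num, fun s hs γ hγ G hG => ?_⟩
  calc ∫ x, (1 + |x|) ^ s * G x ≤ 2 * (∫ x, G x) + 2 * ∫ x, x ^ 2 * G x :=
        integral_one_add_abs_rpow_mul_le hG.nonneg hG.integrable hG.integrable_sq_mul hs.2
    _ ≤ 3 := by linarith [hG.integral_eq_one, energy γ hγ G hG]
end
end

section
/- Let u, v : [0,∞) × ℝ → [0,1] be continuous functions, differentiable in t and ξ, such that for all t ≥ 0 and ξ ∈ ℝ: ∂_t u(t,ξ) − (1/4) ξ ∂_ξ u(t,ξ) + u(t,ξ) ≥ u(t,ξ/2)² and ∂_t v(t,ξ) − (1/4) ξ ∂_ξ v(t,ξ) + v(t,ξ) ≤ v(t,ξ/2)², and such that u(0,ξ) ≥ v(0,ξ) for all ξ ∈ ℝ. Then u(t,ξ) ≥ v(t,ξ) for all t ≥ 0 and all ξ ∈ ℝ. -/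
/-!
Apply a maximum principle to `w = v - u`. For `δ > 0`, the function
`e^{-2s} w(s, η) - δ log(1 + η²)` attains its maximum over `[0, t] × ℝ`
at some `(t₀, ξ₀)`. If `w(t₀, ξ₀) > 0`, then `t₀ > 0`, and at the maximum
`∂_s ≥ 0`, `∂_η = 0` and `w(t₀, ξ₀/2) ≤ w(t₀, ξ₀)` (the penalty is smaller
at `ξ₀/2`). The last fact bounds the nonlinearity:
`v(t₀, ξ₀/2)² - u(t₀, ξ₀/2)² ≤ 2 w(t₀, ξ₀)`. Subtracting the two differential
inequalities then gives `e^{-2t₀} w(t₀, ξ₀) ≤ δ/2`, because the drift of the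
penalty, `¼ η ∂_η log(1 + η²)`, is at most `1/2`. So
`w(t, ξ) ≤ δ e^{2t} (1/2 + log(1 + ξ²))` for every `δ > 0`.
-/

open Real Set Filter Topology

namespace MaxwellComparison

/-- The rate `2` may be any number `> 1`, the Lipschitz constant `2` of `x ↦ x²` on `[0, 1]`
minus the zeroth-order coefficient `1`. -/
noncomputable def penalized (w : ℝ → ℝ → ℝ) (δ s η : ℝ) : ℝ :=
  exp (-(2 * s)) * w s η - δ * log (1 + η ^ 2)

lemma log_one_add_sq_nonneg (η : ℝ) : 0 ≤ log (1 + η ^ 2) :=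
  log_nonneg (by nlinarith [sq_nonneg η])

lemma log_one_add_half_sq_le (η : ℝ) : log (1 + (η / 2) ^ 2) ≤ log (1 + η ^ 2) :=
  log_le_log (by positivity) (by nlinarith [sq_nonneg η])

lemma le_log_one_add_sq_of_exp_le_abs {K η : ℝ} (h : exp K ≤ |η|) :
    K ≤ log (1 + η ^ 2) := by
  have h1 : |η| ≤ 1 + η ^ 2 := by nlinarith [sq_abs η, sq_nonneg (|η| - 1)]
  exact (le_log_iff_exp_le (by positivity)).2 (h.trans h1)

lemma hasDerivAt_log_one_add_sq (η : ℝ) :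
    HasDerivAt (fun η : ℝ => log (1 + η ^ 2)) (2 * η / (1 + η ^ 2)) η := by
  have h : HasDerivAt (fun η : ℝ => 1 + η ^ 2) (2 * η) η := by
    simpa using (hasDerivAt_pow 2 η).const_add (1 : ℝ)
  exact h.log (by positivity)

lemma mul_two_mul_div_one_add_sq_le (η : ℝ) : η * (2 * η / (1 + η ^ 2)) ≤ 2 := by
  rw [mul_div_assoc', div_le_iff₀ (by positivity)]
  nlinarith

lemma sq_sub_sq_le_two_mul {a b c : ℝ} (ha : a ∈ Icc (0 : ℝ) 1) (hb : b ∈ Icc (0 : ℝ) 1)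
    (hab : a - b ≤ c) (hc : 0 ≤ c) : a ^ 2 - b ^ 2 ≤ 2 * c := by
  obtain ⟨ha0, ha1⟩ := ha
  obtain ⟨hb0, hb1⟩ := hb
  rcases le_total a b with h | h
  · nlinarith
  · nlinarith

lemma nonneg_of_hasDerivAt_of_eventually_le_left {f : ℝ → ℝ} {f' a : ℝ}
    (hf : HasDerivAt f f' a) (hle : ∀ᶠ x in 𝓝[<] a, f x ≤ f a) : 0 ≤ f' := by
  have hslope : ∀ᶠ x in 𝓝[<] a, 0 ≤ slope f a x := by
    filter_upwards [hle, self_mem_nhdsWithin] with x hx hxa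
    rw [slope_def_field]
    exact div_nonneg_of_nonpos (by linarith) (by linarith [mem_Iio.1 hxa])
  exact ge_of_tendsto (hf.tendsto_slope.mono_left (nhdsLT_le_nhdsNE a)) hslope

section

variable {w : ℝ → ℝ → ℝ} {δ : ℝ}

lemma continuous_penalized (hw : Continuous fun p : ℝ × ℝ => w p.1 p.2) :
    Continuous fun p : ℝ × ℝ => penalized w δ p.1 p.2 := by
  have hlog : Continuous fun p : ℝ × ℝ => log (1 + p.2 ^ 2) :=
    continuous_snd.pow 2 |>.const_add 1 |>.log fun p =>
      (by positivity : (0 : ℝ) < 1 + p.2 ^ 2).ne'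
  unfold penalized
  fun_prop

lemma eventually_penalized_le {M : ℝ} (hwM : ∀ s η, 0 ≤ s → w s η ≤ M) (hδ : 0 < δ)
    (t c : ℝ) :
    ∀ᶠ p in cocompact (ℝ × ℝ) ⊓ 𝓟 (Icc 0 t ×ˢ univ),
      penalized w δ p.1 p.2 ≤ c := by
  set R := exp ((|M| - c) / δ)
  rw [eventually_inf_principal, Filter.Eventually, mem_cocompact]
  refine ⟨Icc 0 t ×ˢ Icc (-R) R, isCompact_Icc.prod isCompact_Icc, ?_⟩
  rintro ⟨s, η⟩ hK ⟨hs, -⟩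
  have hη : R ≤ |η| := by
    by_contra! h
    exact hK ⟨hs, abs_le.1 h.le⟩
  have hlog : |M| - c ≤ δ * log (1 + η ^ 2) := by
    have := le_log_one_add_sq_of_exp_le_abs hη
    rwa [div_le_iff₀' hδ] at this
  have hdamp : exp (-(2 * s)) * w s η ≤ |M| :=
    calc exp (-(2 * s)) * w s η ≤ exp (-(2 * s)) * |M| :=
          mul_le_mul_of_nonneg_left ((hwM s η hs.1).trans (le_abs_self M)) (exp_pos _).le
      _ ≤ 1 * |M| := by gcongr; exact exp_le_one_iff.2 (by linarith [hs.1])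
      _ = |M| := one_mul _
  simp only [penalized]
  linarith

lemma exists_isMaxOn_penalized (hw : Continuous fun p : ℝ × ℝ => w p.1 p.2) {M : ℝ}
    (hwM : ∀ s η, 0 ≤ s → w s η ≤ M) (hδ : 0 < δ) {t : ℝ} (ht : 0 ≤ t) :
    ∃ p ∈ Icc 0 t ×ˢ univ,
      IsMaxOn (fun p : ℝ × ℝ => penalized w δ p.1 p.2) (Icc 0 t ×ˢ univ) p :=
  (continuous_penalized hw).continuousOn.exists_isMaxOn' (isClosed_Icc.prod isClosed_univ)
    (x₀ := (0, 0)) ⟨⟨le_rfl, ht⟩, trivial⟩ (eventually_penalized_le hwM hδ t _)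

lemma hasDerivAt_penalized_time {s η w' : ℝ} (h : HasDerivAt (fun s => w s η) w' s) :
    HasDerivAt (fun s => penalized w δ s η) (exp (-(2 * s)) * (w' - 2 * w s η)) s := by
  have hexp : HasDerivAt (fun s : ℝ => exp (-(2 * s))) (exp (-(2 * s)) * (-2)) s := by
    simpa using ((hasDerivAt_id s).const_mul (2 : ℝ)).neg.exp
  exact ((hexp.fun_mul h).sub_const (δ * log (1 + η ^ 2))).congr_deriv (by ring)

lemma hasDerivAt_penalized_space {s η w' : ℝ} (h : HasDerivAt (fun η => w s η) w' η) :
    HasDerivAt (fun η => penalized w δ s η)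
      (exp (-(2 * s)) * w' - δ * (2 * η / (1 + η ^ 2))) η :=
  (h.const_mul _).sub ((hasDerivAt_log_one_add_sq η).const_mul δ)

variable (hwt : ∀ s η, 0 < s → DifferentiableAt ℝ (fun s => w s η) s)
  (hwη : ∀ s η, 0 < s → DifferentiableAt ℝ (fun η => w s η) η)
  (hw0 : ∀ η, w 0 η ≤ 0)
  (hwdrift : ∀ s η, 0 < s → 0 < w s η → w s (η / 2) ≤ w s η →
    deriv (fun s => w s η) s - (1/4) * η * deriv (fun η => w s η) η ≤ w s η)
include hwt hwη hw0 hwdrift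

lemma penalized_le_of_isMaxOn (hδ : 0 ≤ δ) {t : ℝ} {p : ℝ × ℝ}
    (hp : p ∈ Icc 0 t ×ˢ univ)
    (hmax : IsMaxOn (fun p : ℝ × ℝ => penalized w δ p.1 p.2) (Icc 0 t ×ˢ univ) p) :
    penalized w δ p.1 p.2 ≤ δ / 2 := by
  obtain ⟨t₀, ξ₀⟩ := p
  obtain ⟨⟨ht₀, ht₀t⟩, -⟩ := hp
  set E := exp (-(2 * t₀))
  have hE : 0 < E := exp_pos _
  have hF : penalized w δ t₀ ξ₀ ≤ E * w t₀ ξ₀ :=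
    sub_le_self _ (mul_nonneg hδ (log_one_add_sq_nonneg ξ₀))
  by_cases hW : w t₀ ξ₀ ≤ 0
  · nlinarith
  push Not at hW
  have ht₀pos : 0 < t₀ := ht₀.lt_of_ne fun h => (hw0 ξ₀).not_gt (h ▸ hW)
  have hline : ∀ η, penalized w δ t₀ η ≤ penalized w δ t₀ ξ₀ := fun η =>
    hmax (mk_mem_prod ⟨ht₀, ht₀t⟩ (mem_univ η))
  have hhalf : w t₀ (ξ₀ / 2) ≤ w t₀ ξ₀ := by
    have h := hline (ξ₀ / 2)
    have hlog := mul_le_mul_of_nonneg_left (log_one_add_half_sq_le ξ₀) hδ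
    simp only [penalized] at h
    exact le_of_mul_le_mul_left (by linarith) hE
  have hspace : E * deriv (fun η => w t₀ η) ξ₀ = δ * (2 * ξ₀ / (1 + ξ₀ ^ 2)) :=
    sub_eq_zero.1 <| IsLocalMax.hasDerivAt_eq_zero (Eventually.of_forall hline)
      (hasDerivAt_penalized_space (hwη t₀ ξ₀ ht₀pos).hasDerivAt)
  have htime : 0 ≤ E * (deriv (fun s => w s ξ₀) t₀ - 2 * w t₀ ξ₀) := by
    refine nonneg_of_hasDerivAt_of_eventually_le_left
      (hasDerivAt_penalized_time (δ := δ) (hwt t₀ ξ₀ ht₀pos).hasDerivAt) ?_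
    filter_upwards [Ioo_mem_nhdsLT ht₀pos] with s hs
    exact hmax (mk_mem_prod ⟨hs.1.le, hs.2.le.trans ht₀t⟩ (mem_univ ξ₀))
  have hpde := mul_le_mul_of_nonneg_left (hwdrift t₀ ξ₀ ht₀pos hW hhalf) hE.le
  have hdrift := mul_le_mul_of_nonneg_left (mul_two_mul_div_one_add_sq_le ξ₀) hδ
  have hEW : E * w t₀ ξ₀ ≤ δ / 2 := by
    linear_combination htime + hpde + (1/4) * hdrift + (ξ₀/4) * hspace
  linarith

theorem nonpos_of_linearized_subsolution (hw : Continuous fun p : ℝ × ℝ => w p.1 p.2) {M : ℝ}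
    (hwM : ∀ s η, 0 ≤ s → w s η ≤ M) {t ξ : ℝ} (ht : 0 ≤ t) : w t ξ ≤ 0 := by
  refine le_of_forall_pos_le_add fun ε hε => ?_
  set C := exp (2 * t) * (1 / 2 + log (1 + ξ ^ 2)) with hC_def
  have hC : 0 < C := by have := log_one_add_sq_nonneg ξ; positivity
  set δ := ε / C
  have hδ : 0 < δ := div_pos hε hC
  obtain ⟨p, hp, hmax⟩ := exists_isMaxOn_penalized hw hwM hδ ht
  have h := (hmax (mk_mem_prod ⟨ht, le_rfl⟩ (mem_univ ξ))).trans
    (penalized_le_of_isMaxOn hwt hwη hw0 hwdrift hδ.le hp hmax)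
  simp only [penalized] at h
  calc w t ξ = exp (2 * t) * (exp (-(2 * t)) * w t ξ) := by
        rw [← mul_assoc, ← exp_add]; simp
    _ ≤ exp (2 * t) * (δ * (1 / 2 + log (1 + ξ ^ 2))) :=
        mul_le_mul_of_nonneg_left (by linarith) (exp_pos _).le
    _ = 0 + ε := by rw [← div_mul_cancel₀ ε hC.ne', hC_def]; ring

end

end MaxwellComparison

open MaxwellComparison

/-- **Comparison principle** for super- and sub-solutions of the self-similar Maxwell
equation in Fourier variables: if `∂_t u − (1/4)ξ∂_ξ u + u ≥ u(t,ξ/2)²`,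
`∂_t v − (1/4)ξ∂_ξ v + v ≤ v(t,ξ/2)²`, with `u, v ∈ [0,1]` and `v(0,·) ≤ u(0,·)`,
then `v ≤ u` for all times. -/
theorem comparison_principle
    (u v : ℝ → ℝ → ℝ)
    (hucont : Continuous fun p : ℝ × ℝ => u p.1 p.2)
    (hvcont : Continuous fun p : ℝ × ℝ => v p.1 p.2)
    (hu01 : ∀ t ξ : ℝ, 0 ≤ t → u t ξ ∈ Icc (0:ℝ) 1)
    (hv01 : ∀ t ξ : ℝ, 0 ≤ t → v t ξ ∈ Icc (0:ℝ) 1)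
    (hut : ∀ t ξ : ℝ, 0 ≤ t → DifferentiableAt ℝ (fun s => u s ξ) t)
    (hux : ∀ t ξ : ℝ, 0 ≤ t → DifferentiableAt ℝ (fun η => u t η) ξ)
    (hvt : ∀ t ξ : ℝ, 0 ≤ t → DifferentiableAt ℝ (fun s => v s ξ) t)
    (hvx : ∀ t ξ : ℝ, 0 ≤ t → DifferentiableAt ℝ (fun η => v t η) ξ)
    (hsuper : ∀ t ξ : ℝ, 0 ≤ t →
      (u t (ξ/2)) ^ 2 ≤
        deriv (fun s => u s ξ) t - (1/4) * ξ * deriv (fun η => u t η) ξ + u t ξ)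
    (hsub : ∀ t ξ : ℝ, 0 ≤ t →
      deriv (fun s => v s ξ) t - (1/4) * ξ * deriv (fun η => v t η) ξ + v t ξ ≤
        (v t (ξ/2)) ^ 2)
    (hinit : ∀ ξ : ℝ, v 0 ξ ≤ u 0 ξ) :
    ∀ t ξ : ℝ, 0 ≤ t → v t ξ ≤ u t ξ := by
  intro t ξ ht
  have hdrift : ∀ s η, 0 < s → 0 < v s η - u s η →
      v s (η / 2) - u s (η / 2) ≤ v s η - u s η →
      deriv (fun s => v s η - u s η) s
        - (1/4) * η * deriv (fun η => v s η - u s η) η ≤ v s η - u s η := by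
    intro s η hs hpos hhalf
    rw [deriv_fun_sub (hvt s η hs.le) (hut s η hs.le),
      deriv_fun_sub (hvx s η hs.le) (hux s η hs.le)]
    have hsq := sq_sub_sq_le_two_mul (hv01 s (η / 2) hs.le) (hu01 s (η / 2) hs.le) hhalf hpos.le
    linarith [hsub s η hs.le, hsuper s η hs.le]
  have hbound : ∀ s η, 0 ≤ s → v s η - u s η ≤ 1 := fun s η hs => by
    linarith [(hv01 s η hs).2, (hu01 s η hs).1]
  exact sub_nonpos.1 <| nonpos_of_linearized_subsolution
    (fun s η hs => (hvt s η hs.le).fun_sub (hut s η hs.le))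
    (fun s η hs => (hvx s η hs.le).fun_sub (hux s η hs.le))
    (fun η => sub_nonpos.2 (hinit η)) hdrift (hvcont.sub hucont) hbound ht
end

section
/- Let φ : [0,∞) × ℝ → ℂ be continuous, differentiable in t and ξ, satisfying ∂_t φ(t,ξ) = (1/4) ξ ∂_ξ φ(t,ξ) + φ(t,ξ/2)² − φ(t,ξ) for all t ≥ 0 and ξ ∈ ℝ, with |φ(t,ξ)| ≤ 1 everywhere. Assume that |φ(0,ξ)| ≤ Φ(aξ) for some a > 0 and all ξ ∈ ℝ. Then |φ(t,ξ)| ≤ Φ(aξ) for all t ≥ 0 and all ξ ∈ ℝ. -/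
/-!
`Φ(a·)` is a stationary solution, so by Kato's inequality for `|φ|` and `|φ| + Φ ≤ 2` the
difference `W = |φ| − Φ(a·)` satisfies `∂ₜW ≤ (ξ/4) ∂_ξ W + 2 W(ξ/2)⁺ − W` wherever `W > 0`.
A maximum principle then keeps `W ≤ 0`: at a positive maximum of
`e^{−2t} W − δ(1 + ξ²)` the time derivative is `≥ 0`, the ξ-derivative vanishes, and the value at
`ξ/2` is controlled by the one at `ξ`, which together contradict the inequality.
-/

open MeasureTheory Real Set Filter

noncomputable section

/-- `Φ(ξ) = (1+|ξ|)e^{−|ξ|}`, the Fourier transform of the steady Maxwell profile. -/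
def Phi (ξ : ℝ) : ℝ := (1 + |ξ|) * Real.exp (-|ξ|)

open scoped RealInnerProductSpace

lemma Phi_nonneg (y : ℝ) : 0 ≤ Phi y := by
  unfold Phi; positivity

lemma Phi_le_one (y : ℝ) : Phi y ≤ 1 := by
  calc Phi y ≤ exp |y| * exp (-|y|) := by
        unfold Phi; gcongr; linarith [add_one_le_exp |y|]
    _ = 1 := by rw [← exp_add, add_neg_cancel, exp_zero]

@[fun_prop] lemma continuous_Phi : Continuous Phi := by
  unfold Phi; fun_prop

@[simp] lemma Phi_zero : Phi 0 = 1 := by simp [Phi]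

lemma hasDerivAt_Phi {y : ℝ} (hy : y ≠ 0) : HasDerivAt Phi (-y * exp (-|y|)) y := by
  have hg : HasDerivAt (fun r => (1 + r) * exp (-r)) (-|y| * exp (-|y|)) |y| := by
    have h := ((hasDerivAt_id' |y|).const_add 1).mul (hasDerivAt_neg' |y|).exp
    exact h.congr_deriv (by ring)
  have h := hg.comp y (hasDerivAt_abs hy)
  rw [mul_right_comm, neg_mul, abs_mul_sign] at h
  exact h

lemma Phi_sub_Phi_half_sq (y : ℝ) : Phi y - Phi (y / 2) ^ 2 = y / 4 * (-y * exp (-|y|)) := by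
  have hhalf : exp (-(|y| / 2)) ^ 2 = exp (-|y|) := by
    rw [← exp_nat_mul]; congr 1; push_cast; ring
  have hsq : y * y = |y| * |y| := (abs_mul_abs_self y).symm
  simp only [Phi, mul_pow, abs_div, abs_two, hhalf]
  linear_combination (exp (-|y|) / 4) * hsq

lemma sq_le_sq_add_two_mul_max {p q : ℝ} (hpq : 0 ≤ p + q) (hpq' : p + q ≤ 2) :
    p ^ 2 ≤ q ^ 2 + 2 * max (p - q) 0 := by
  rcases le_total q p with h | h
  · rw [max_eq_left (sub_nonneg.2 h)]; nlinarith
  · rw [max_eq_right (sub_nonpos.2 h)]; nlinarith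

lemma HasDerivAt.norm {F : Type*} [NormedAddCommGroup F] [InnerProductSpace ℝ F]
    {f : ℝ → F} {f' : F} {x : ℝ} (hf : HasDerivAt f f' x) (h0 : f x ≠ 0) :
    HasDerivAt (‖f ·‖) (⟪f x, f'⟫ / ‖f x‖) x := by
  have h := hf.norm_sq.sqrt (by positivity)
  simp only [sqrt_sq (norm_nonneg _)] at h
  convert h using 1
  field_simp

lemma HasDerivAt.nonneg_of_isMaxOn_Icc {f : ℝ → ℝ} {f' a b : ℝ} (hf : HasDerivAt f f' b)
    (hab : a < b) (hmax : IsMaxOn f (Icc a b) b) : 0 ≤ f' := by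
  have hcone : a - b ∈ posTangentConeAt (Icc a b) b :=
    sub_mem_posTangentConeAt_of_segment_subset (by rw [segment_symm, segment_eq_Icc hab.le])
  have := hmax.localize.hasFDerivWithinAt_nonpos hf.hasFDerivAt.hasFDerivWithinAt hcone
  simp only [ContinuousLinearMap.toSpanSingleton_apply, smul_eq_mul] at this
  nlinarith

lemma inner_div_norm_le_of_eq {z dt dξ y : ℂ} {r : ℝ} (hz : z ≠ 0)
    (h : dt = r * dξ + y ^ 2 - z) :
    ⟪z, dt⟫ / ‖z‖ ≤ r * (⟪z, dξ⟫ / ‖z‖) + ‖y‖ ^ 2 - ‖z‖ := by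
  have hz' : 0 < ‖z‖ := norm_pos_iff.2 hz
  have hy : ⟪z, y ^ 2⟫ ≤ ‖z‖ * ‖y‖ ^ 2 :=
    (real_inner_le_norm z (y ^ 2)).trans_eq (by rw [norm_pow])
  rw [h, ← Complex.real_smul, inner_sub_right, inner_add_right, real_inner_smul_right,
    real_inner_self_eq_norm_sq, div_le_iff₀ hz']
  field_simp
  nlinarith

/-- The weight `e^{−2t}` makes the zeroth-order terms strictly dissipative at a maximum, and the
penalization `δ(1 + ξ²)` confines the maximum to a compact rectangle. -/
def penalized (W : ℝ → ℝ → ℝ) (δ : ℝ) (p : ℝ × ℝ) : ℝ :=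
  exp (-(2 * p.1)) * W p.1 p.2 - δ * (1 + p.2 ^ 2)

/-- Required only where `W > 0`: for `W = ‖φ‖ − Φ(a·)` this is where `φ ≠ 0` and `aξ ≠ 0`, so
that both terms are differentiable. -/
def IsSubsolution (W : ℝ → ℝ → ℝ) : Prop :=
  ∀ t ξ, 0 < t → 0 < W t ξ → ∃ Dt Dξ, HasDerivAt (W · ξ) Dt t ∧ HasDerivAt (W t ·) Dξ ξ ∧
    Dt ≤ ξ / 4 * Dξ + 2 * max (W t (ξ / 2)) 0 - W t ξ

section MaximumPrinciple

variable {W : ℝ → ℝ → ℝ}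

lemma IsSubsolution.not_isMaxOn_penalized (hsub : IsSubsolution W) {δ T R t x : ℝ} (hδ : 0 < δ)
    (ht : 0 < t) (htT : t ≤ T) (hx : |x| < R)
    (hmax : IsMaxOn (penalized W δ) (Icc 0 T ×ˢ Icc (-R) R) (t, x))
    (hpos : 0 < penalized W δ (t, x)) : False := by
  set E := exp (-(2 * t)) with hE_def
  have hE : 0 < E := exp_pos _
  have hWpos : 0 < W t x := by
    unfold penalized at hpos
    exact pos_of_mul_pos_right (by nlinarith [sq_nonneg x]) hE.le
  obtain ⟨Dt, Dξ, hDt, hDξ, hineq⟩ := hsub t x ht hWpos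
  obtain ⟨hxl, hxr⟩ := abs_lt.mp hx
  have hξ : E * Dξ - δ * (2 * x) = 0 := by
    have hd : HasDerivAt (fun ξ => penalized W δ (t, ξ)) (E * Dξ - δ * (2 * x)) x := by
      refine ((hDξ.const_mul E).sub (((hasDerivAt_pow 2 x).const_add 1).const_mul δ)).congr_deriv ?_
      norm_num
    refine IsLocalMax.hasDerivAt_eq_zero ?_ hd
    filter_upwards [Ioo_mem_nhds hxl hxr] with ξ hξ
    exact hmax ⟨⟨ht.le, htT⟩, hξ.1.le, hξ.2.le⟩
  have hτ : 0 ≤ E * (-2) * W t x + E * Dt := by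
    have hd : HasDerivAt (fun s => penalized W δ (s, x)) (E * (-2) * W t x + E * Dt) t := by
      have he : HasDerivAt (fun s => exp (-(2 * s))) (E * (-2)) t := by
        simpa using ((hasDerivAt_id' t).const_mul 2).neg.exp
      exact ((he.mul hDt).sub_const (δ * (1 + x ^ 2))).congr_deriv (by ring)
    exact hd.nonneg_of_isMaxOn_Icc ht fun s hs => hmax ⟨⟨hs.1, hs.2.trans htT⟩, hxl.le, hxr.le⟩
  have hhalf : penalized W δ (t, x / 2) ≤ penalized W δ (t, x) :=
    hmax ⟨⟨ht.le, htT⟩, by constructor <;> linarith [abs_nonneg x]⟩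
  dsimp only [penalized] at hpos hhalf
  rw [← hE_def] at hpos hhalf
  have hmax_half : E * max (W t (x / 2)) 0 ≤ E * W t x - 3 / 4 * δ * x ^ 2 := by
    rw [mul_max_of_nonneg _ _ hE.le, mul_zero]
    exact max_le (by linarith) (by nlinarith [mul_nonneg hδ.le (sq_nonneg x)])
  nlinarith [mul_le_mul_of_nonneg_left hineq hE.le]

theorem IsSubsolution.nonpos (hsub : IsSubsolution W) (hW : Continuous fun p : ℝ × ℝ => W p.1 p.2)
    (hle : ∀ t ξ, 0 ≤ t → W t ξ ≤ 1) (h0 : ∀ ξ, W 0 ξ ≤ 0) {t₀ : ℝ} (ht₀ : 0 ≤ t₀) (ξ₀ : ℝ) :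
    W t₀ ξ₀ ≤ 0 := by
  by_contra! hpos
  set δ := exp (-(2 * t₀)) * W t₀ ξ₀ / (2 * (1 + ξ₀ ^ 2)) with hδ_def
  have hδ : 0 < δ := by positivity
  have hv₀ : 0 < penalized W δ (t₀, ξ₀) := by
    have h : δ * (1 + ξ₀ ^ 2) = exp (-(2 * t₀)) * W t₀ ξ₀ / 2 := by rw [hδ_def]; field_simp
    dsimp only [penalized]
    linarith [mul_pos (exp_pos (-(2 * t₀))) hpos]
  set R := |ξ₀| + 1 + 1 / δ with hR_def
  have hR : 1 ≤ δ * (1 + R ^ 2) := by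
    have h1 : 1 / δ ≤ R := by rw [hR_def]; linarith [abs_nonneg ξ₀]
    have h2 : 1 ≤ R := by rw [hR_def]; linarith [abs_nonneg ξ₀, one_div_pos.2 hδ]
    calc 1 = δ * (1 / δ) := (mul_one_div_cancel hδ.ne').symm
      _ ≤ δ * (R * R) := by gcongr; nlinarith
      _ ≤ δ * (1 + R ^ 2) := by gcongr; nlinarith
  have hcont : Continuous (penalized W δ) := by unfold penalized; fun_prop
  have hmem₀ : (t₀, ξ₀) ∈ Icc 0 t₀ ×ˢ Icc (-R) R :=
    ⟨⟨ht₀, le_rfl⟩, abs_le.mp (show |ξ₀| ≤ R by linarith [one_div_pos.2 hδ])⟩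
  obtain ⟨⟨t, x⟩, ⟨⟨ht0, htT⟩, hxR⟩, hmax⟩ :=
    (isCompact_Icc.prod isCompact_Icc).exists_isMaxOn ⟨_, hmem₀⟩ hcont.continuousOn
  have hvpos : 0 < penalized W δ (t, x) := hv₀.trans_le (hmax hmem₀)
  dsimp only [penalized] at hvpos
  refine hsub.not_isMaxOn_penalized hδ (ht0.lt_of_ne ?_) htT
    ((abs_le.mpr hxR).lt_of_ne ?_) hmax hvpos
  · rintro rfl
    rw [mul_zero, neg_zero, exp_zero, one_mul] at hvpos
    nlinarith [h0 x, sq_nonneg x]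
  · intro hx
    have hE : exp (-(2 * t)) ≤ 1 := exp_le_one_iff.2 (by linarith)
    have hEW : exp (-(2 * t)) * W t x ≤ 1 := by nlinarith [exp_pos (-(2 * t)), hle t x ht0]
    rw [← sq_abs x, hx] at hvpos
    linarith

end MaximumPrinciple

lemma isSubsolution_norm_sub_Phi {φ : ℝ → ℝ → ℂ} (a : ℝ)
    (hdiff_t : ∀ t ξ : ℝ, 0 ≤ t → DifferentiableAt ℝ (fun s => φ s ξ) t)
    (hdiff_x : ∀ t ξ : ℝ, 0 ≤ t → DifferentiableAt ℝ (fun η => φ t η) ξ)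
    (heq : ∀ t ξ : ℝ, 0 ≤ t →
      deriv (fun s => φ s ξ) t =
        (1/4 : ℂ) * (ξ : ℂ) * deriv (fun η => φ t η) ξ + (φ t (ξ/2)) ^ 2 - φ t ξ)
    (hbdd : ∀ t ξ : ℝ, 0 ≤ t → ‖φ t ξ‖ ≤ 1) :
    IsSubsolution fun t ξ => ‖φ t ξ‖ - Phi (a * ξ) := by
  intro t ξ ht hpos
  beta_reduce at hpos
  have hbdd_t := hbdd t ξ ht.le
  have haξ : a * ξ ≠ 0 := by
    intro h
    rw [h, Phi_zero] at hpos
    linarith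
  have hφ : φ t ξ ≠ 0 := by
    intro h
    rw [h, norm_zero] at hpos
    linarith [Phi_nonneg (a * ξ)]
  have hDξ := ((hdiff_x t ξ ht.le).hasDerivAt.norm hφ).sub
    ((hasDerivAt_Phi haξ).comp ξ ((hasDerivAt_id' ξ).const_mul a))
  refine ⟨_, _, ((hdiff_t t ξ ht.le).hasDerivAt.norm hφ).sub_const _, hDξ, ?_⟩
  have hmodulus := inner_div_norm_le_of_eq (dt := deriv (fun s => φ s ξ) t)
    (dξ := deriv (fun η => φ t η) ξ) (y := φ t (ξ / 2)) (r := ξ / 4) hφ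
    (by rw [heq t ξ ht.le]; push_cast; ring)
  have hstationary : ξ / 4 * (-(a * ξ) * exp (-|a * ξ|) * (a * 1)) =
      Phi (a * ξ) - Phi (a * (ξ / 2)) ^ 2 := by
    rw [← mul_div_assoc, Phi_sub_Phi_half_sq]; ring
  have hhalf := sq_le_sq_add_two_mul_max (p := ‖φ t (ξ / 2)‖) (q := Phi (a * (ξ / 2)))
    (by linarith [norm_nonneg (φ t (ξ / 2)), Phi_nonneg (a * (ξ / 2))])
    (by linarith [hbdd t (ξ / 2) ht.le, Phi_le_one (a * (ξ / 2))])
  linarith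

theorem propagation_of_strong_smoothness_general
    (φ : ℝ → ℝ → ℂ) (a : ℝ)
    (hcont : Continuous fun p : ℝ × ℝ => φ p.1 p.2)
    (hdiff_t : ∀ t ξ : ℝ, 0 ≤ t → DifferentiableAt ℝ (fun s => φ s ξ) t)
    (hdiff_x : ∀ t ξ : ℝ, 0 ≤ t → DifferentiableAt ℝ (fun η => φ t η) ξ)
    (heq : ∀ t ξ : ℝ, 0 ≤ t →
      deriv (fun s => φ s ξ) t =
        (1/4 : ℂ) * (ξ : ℂ) * deriv (fun η => φ t η) ξ + (φ t (ξ/2)) ^ 2 - φ t ξ)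
    (hbdd : ∀ t ξ : ℝ, 0 ≤ t → ‖φ t ξ‖ ≤ 1)
    (hinit : ∀ ξ : ℝ, ‖φ 0 ξ‖ ≤ Phi (a * ξ)) :
    ∀ t ξ : ℝ, 0 ≤ t → ‖φ t ξ‖ ≤ Phi (a * ξ) := by
  intro t ξ ht
  have hW : ‖φ t ξ‖ - Phi (a * ξ) ≤ 0 :=
    (isSubsolution_norm_sub_Phi a hdiff_t hdiff_x heq hbdd).nonpos (by fun_prop)
      (fun t ξ ht => by linarith [hbdd t ξ ht, Phi_nonneg (a * ξ)])
      (fun ξ => sub_nonpos.2 (hinit ξ)) ht ξ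
  exact sub_nonpos.1 hW

/-- **Propagation of strong smoothness.** If `φ` solves the self-similar Maxwell
equation in Fourier variables with `|φ| ≤ 1` and `|φ(0,ξ)| ≤ Φ(aξ)` for some `a > 0`,
then `|φ(t,ξ)| ≤ Φ(aξ)` for all `t ≥ 0`. -/
theorem propagation_of_strong_smoothness
    (φ : ℝ → ℝ → ℂ) (a : ℝ) (ha : 0 < a)
    (hcont : Continuous fun p : ℝ × ℝ => φ p.1 p.2)
    (hdiff_t : ∀ t ξ : ℝ, 0 ≤ t → DifferentiableAt ℝ (fun s => φ s ξ) t)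
    (hdiff_x : ∀ t ξ : ℝ, 0 ≤ t → DifferentiableAt ℝ (fun η => φ t η) ξ)
    (heq : ∀ t ξ : ℝ, 0 ≤ t →
      deriv (fun s => φ s ξ) t =
        (1/4 : ℂ) * (ξ : ℂ) * deriv (fun η => φ t η) ξ + (φ t (ξ/2)) ^ 2 - φ t ξ)
    (hbdd : ∀ t ξ : ℝ, 0 ≤ t → ‖φ t ξ‖ ≤ 1)
    (hinit : ∀ ξ : ℝ, ‖φ 0 ξ‖ ≤ Phi (a * ξ)) :
    ∀ t ξ : ℝ, 0 ≤ t → ‖φ t ξ‖ ≤ Phi (a * ξ) :=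
  propagation_of_strong_smoothness_general φ a hcont hdiff_t hdiff_x heq hbdd hinit

end
end
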